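/- Let $W(t)$ be the solution on $[0,\varepsilon)$ of the matrix Riccati Cauchy problem $\dot W = \Gamma_1^* W + W \Gamma_1 + \Gamma_2 + W R(t) W$, $W(0) = 0$, where $\Gamma_2 \geq 0$ and the pair satisfies the controllability (Kalman) condition $\mathrm{span}\{\Gamma_2, \Gamma_2\Gamma_1, \ldots, \Gamma_2\Gamma_1^m\} = \mathbb{R}^n$ (i.e. the block matrix $[\Gamma_2\ \Gamma_2\Gamma_1\ \cdots\ \Gamma_2\Gamma_1^m]$ has rank $n$). Then $W(t) > 0$ (positive definite) for all sufficiently small $t > 0$. -/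

import Mathlib

open Matrix Set Filter Topology

noncomputable local instance riccatiMatNormedAddCommGroup (n : ℕ) :
    NormedAddCommGroup (Matrix (Fin n) (Fin n) ℝ) :=
  inferInstanceAs (NormedAddCommGroup (Fin n → Fin n → ℝ))

noncomputable local instance riccatiMatNormedSpace (n : ℕ) :
    NormedSpace ℝ (Matrix (Fin n) (Fin n) ℝ) :=
  inferInstanceAs (NormedSpace ℝ (Fin n → Fin n → ℝ))

namespace RiccatiAux

variable {n : ℕ}

lemma abs_entry_le_norm (A : Matrix (Fin n) (Fin n) ℝ) (i j : Fin n) : |A i j| ≤ ‖A‖ :=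
  le_trans (norm_le_pi_norm (A i) j) (norm_le_pi_norm (A : Fin n → Fin n → ℝ) i)

lemma norm_le_of_entries (A : Matrix (Fin n) (Fin n) ℝ) {C : ℝ} (hC : 0 ≤ C)
    (h : ∀ i j, |A i j| ≤ C) : ‖A‖ ≤ C :=
  (pi_norm_le_iff_of_nonneg hC).mpr fun i =>
    (pi_norm_le_iff_of_nonneg hC).mpr fun j => h i j

lemma norm_mul_le' (A B : Matrix (Fin n) (Fin n) ℝ) : ‖A * B‖ ≤ n * ‖A‖ * ‖B‖ := by
  have h0 : (0:ℝ) ≤ (n:ℝ) * ‖A‖ * ‖B‖ := by positivity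
  refine norm_le_of_entries _ h0 fun i j => ?_
  rw [Matrix.mul_apply]
  calc |∑ k, A i k * B k j| ≤ ∑ k, |A i k * B k j| := Finset.abs_sum_le_sum_abs _ _
    _ ≤ ∑ _k : Fin n, ‖A‖ * ‖B‖ := Finset.sum_le_sum fun k _ => by
        rw [abs_mul]
        exact mul_le_mul (abs_entry_le_norm A i k) (abs_entry_le_norm B k j)
          (abs_nonneg _) (norm_nonneg _)
    _ = n * ‖A‖ * ‖B‖ := by
        simp [Finset.sum_const, Finset.card_univ, nsmul_eq_mul, mul_assoc]

lemma norm_transpose_le (A : Matrix (Fin n) (Fin n) ℝ) : ‖Aᵀ‖ ≤ ‖A‖ :=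
  norm_le_of_entries _ (norm_nonneg A) fun i j => abs_entry_le_norm A j i

lemma norm_transpose_eq (A : Matrix (Fin n) (Fin n) ℝ) : ‖Aᵀ‖ = ‖A‖ :=
  le_antisymm (norm_transpose_le A) (by simpa using norm_transpose_le Aᵀ)

lemma hasDerivWithinAt_matrix {W : ℝ → Matrix (Fin n) (Fin n) ℝ}
    {W' : Matrix (Fin n) (Fin n) ℝ} {s : Set ℝ} {t : ℝ}
    (h : ∀ i j, HasDerivWithinAt (fun u => W u i j) (W' i j) s t) :
    HasDerivWithinAt W W' s t := by
  show HasDerivWithinAt (fun u => (W u : Fin n → Fin n → ℝ)) (W' : Fin n → Fin n → ℝ) s t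
  refine hasDerivWithinAt_pi.mpr ?_
  intro i
  rw [hasDerivWithinAt_pi]
  exact h i

lemma quad_abs_le (Δ : Matrix (Fin n) (Fin n) ℝ) {y : Fin n → ℝ} (hy : ‖y‖ ≤ 1) :
    |y ⬝ᵥ Δ *ᵥ y| ≤ (n:ℝ)^2 * ‖Δ‖ := by
  have hyk : ∀ k, |y k| ≤ 1 := fun k => le_trans (norm_le_pi_norm y k) hy
  have key : ∀ i, |y i * (Δ *ᵥ y) i| ≤ ∑ _j : Fin n, ‖Δ‖ := by
    intro i
    rw [abs_mul]
    calc |y i| * |(Δ *ᵥ y) i| ≤ 1 * |∑ j, Δ i j * y j| := by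
          refine mul_le_mul (hyk i) ?_ (abs_nonneg _) zero_le_one
          simp [Matrix.mulVec, dotProduct]
      _ = |∑ j, Δ i j * y j| := one_mul _
      _ ≤ ∑ j, |Δ i j * y j| := Finset.abs_sum_le_sum_abs _ _
      _ ≤ ∑ _j : Fin n, ‖Δ‖ := by
          refine Finset.sum_le_sum fun j _ => ?_
          rw [abs_mul]
          have := mul_le_mul (abs_entry_le_norm Δ i j) (hyk j) (abs_nonneg _) (norm_nonneg _)
          simpa using this
  calc |y ⬝ᵥ Δ *ᵥ y| = |∑ i, y i * (Δ *ᵥ y) i| := by simp [dotProduct]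
    _ ≤ ∑ i, |y i * (Δ *ᵥ y) i| := Finset.abs_sum_le_sum_abs _ _
    _ ≤ ∑ _i : Fin n, ∑ _j : Fin n, ‖Δ‖ := Finset.sum_le_sum fun i _ => key i
    _ = (n:ℝ)^2 * ‖Δ‖ := by
        simp [Finset.sum_const, Finset.card_univ, nsmul_eq_mul]
        ring

end RiccatiAux

/-- If `W` solves the Riccati Cauchy problem `Ẇ = Γ₁ᵀW + WΓ₁ + Γ₂ + WR(t)W`, `W(0)=0`,
with `Γ₂ ≥ 0` and the Kalman controllability condition
`span{Γ₂, Γ₂Γ₁, …, Γ₂Γ₁^m} = ℝⁿ`, then `W(t) > 0` for all sufficiently small `t > 0`. -/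
theorem riccati_solution_posDef_small_time (n : ℕ) (ε : ℝ) (hε : 0 < ε)
    (Γ₁ Γ₂ : Matrix (Fin n) (Fin n) ℝ) (hΓ₂ : Γ₂.PosSemidef)
    (m : ℕ)
    (hKalman : ∀ x : Fin n → ℝ, (∀ i ≤ m, x ᵥ* (Γ₂ * Γ₁ ^ i) = 0) → x = 0)
    (R : ℝ → Matrix (Fin n) (Fin n) ℝ)
    (hRc : ContinuousOn R (Ico 0 ε)) (hRs : ∀ t ∈ Ico 0 ε, (R t).IsSymm)
    (W W' : ℝ → Matrix (Fin n) (Fin n) ℝ)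
    (hW0 : W 0 = 0)
    (hd : ∀ t ∈ Ico 0 ε, ∀ i j,
      HasDerivWithinAt (fun s => W s i j) (W' t i j) (Ico 0 ε) t)
    (heq : ∀ t ∈ Ico 0 ε, W' t = Γ₁ᵀ * W t + W t * Γ₁ + Γ₂ + W t * R t * W t) :
    ∃ δ > 0, ∀ t, 0 < t → t < δ → (W t).PosDef := by
  classical
  rcases Nat.eq_zero_or_pos n with hn0 | hn
  · subst hn0
    refine ⟨ε, hε, fun t _ _ => ⟨?_, fun x hx => absurd (Finsupp.ext fun i => Fin.elim0 i : x = 0) hx⟩⟩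
    ext i j
    exact i.elim0
  haveI : Nonempty (Fin n) := ⟨⟨0, hn⟩⟩
  -- Γ₂ is symmetric
  have hΓs : Γ₂ᵀ = Γ₂ := isHermitian_iff_isSymm.mp hΓ₂.1
  -- Γ₂ is positive definite (the Kalman condition with `i = 0` forces injectivity)
  have hΓpd : Γ₂.PosDef := by
    refine posDef_iff_dotProduct_mulVec.mpr ⟨hΓ₂.1, fun x hx => ?_⟩
    rcases lt_or_eq_of_le ((posSemidef_iff_dotProduct_mulVec.mp hΓ₂).2 x) with h | h
    · exact h
    · exfalso
      apply hx
      apply hKalman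
      have h0 : Γ₂ *ᵥ x = 0 := (hΓ₂.dotProduct_mulVec_zero_iff x).mp h.symm
      have hx0 : x ᵥ* Γ₂ = 0 := by
        rw [← hΓs, vecMul_transpose]
        exact h0
      intro i _
      rw [← Matrix.vecMul_vecMul, hx0, Matrix.zero_vecMul]
  -- matrix-valued derivatives and continuity
  have hdM : ∀ t ∈ Ico 0 ε, HasDerivWithinAt W (W' t) (Ico 0 ε) t :=
    fun t ht => RiccatiAux.hasDerivWithinAt_matrix (hd t ht)
  have hdMT : ∀ t ∈ Ico 0 ε,
      HasDerivWithinAt (fun s => (W s)ᵀ) ((W' t)ᵀ) (Ico 0 ε) t :=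
    fun t ht => RiccatiAux.hasDerivWithinAt_matrix (fun i j => hd t ht j i)
  have hWc : ContinuousOn W (Ico 0 ε) := fun t ht => (hdM t ht).continuousWithinAt
  have hWtc : ContinuousOn (fun t => (W t)ᵀ) (Ico 0 ε) :=
    fun t ht => (hdMT t ht).continuousWithinAt
  -- the interval on which we work
  set b : ℝ := ε / 2 with hbdef
  have hb0 : 0 < b := by positivity
  have hbε : b < ε := by
    rw [hbdef]
    linarith
  have hsub : Icc (0:ℝ) b ⊆ Ico 0 ε := fun t ht => ⟨ht.1, lt_of_le_of_lt ht.2 hbε⟩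
  -- bounds for W and R on [0, b]
  obtain ⟨Cw₀, hCw₀⟩ := isCompact_Icc.exists_bound_of_continuousOn (hWc.mono hsub)
  obtain ⟨Cr₀, hCr₀⟩ := isCompact_Icc.exists_bound_of_continuousOn (hRc.mono hsub)
  set Cw : ℝ := max Cw₀ 0 with hCwdef
  set Cr : ℝ := max Cr₀ 0 with hCrdef
  have hCw : ∀ t ∈ Icc (0:ℝ) b, ‖W t‖ ≤ Cw := fun t ht => (hCw₀ t ht).trans (le_max_left _ _)
  have hCr : ∀ t ∈ Icc (0:ℝ) b, ‖R t‖ ≤ Cr := fun t ht => (hCr₀ t ht).trans (le_max_left _ _)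
  have hCw0 : 0 ≤ Cw := le_max_right _ _
  have hCr0 : 0 ≤ Cr := le_max_right _ _
  -- the antisymmetric part of W vanishes (Gronwall)
  set Dm : ℝ → Matrix (Fin n) (Fin n) ℝ := fun t => W t - (W t)ᵀ with hDmdef
  set Dm' : ℝ → Matrix (Fin n) (Fin n) ℝ := fun t => W' t - (W' t)ᵀ with hDm'def
  have hDd : ∀ t ∈ Ico 0 ε, HasDerivWithinAt Dm (Dm' t) (Ico 0 ε) t :=
    fun t ht => (hdM t ht).sub (hdMT t ht)
  have hDeq : ∀ t ∈ Ico 0 ε, Dm' t =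
      Γ₁ᵀ * Dm t + Dm t * Γ₁ + (Dm t * (R t * W t) + ((W t)ᵀ * R t) * Dm t) := by
    intro t ht
    have hR : (R t)ᵀ = R t := hRs t ht
    rw [hDm'def, hDmdef]
    simp only [heq t ht, Matrix.transpose_add, Matrix.transpose_mul,
      Matrix.transpose_transpose, hR, hΓs]
    noncomm_ring
  set K : ℝ := n * ‖Γ₁ᵀ‖ + n * ‖Γ₁‖ + n * (n * Cr * Cw) + n * (n * Cw * Cr) with hKdef
  have hbound : ∀ t ∈ Ico (0:ℝ) b, ‖Dm' t‖ ≤ K * ‖Dm t‖ + 0 := by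
    intro t ht
    have htIcc : t ∈ Icc (0:ℝ) b := ⟨ht.1, le_of_lt ht.2⟩
    have htS : t ∈ Ico (0:ℝ) ε := hsub htIcc
    have h1 : ‖Γ₁ᵀ * Dm t‖ ≤ n * ‖Γ₁ᵀ‖ * ‖Dm t‖ := RiccatiAux.norm_mul_le' _ _
    have h2 : ‖Dm t * Γ₁‖ ≤ n * ‖Dm t‖ * ‖Γ₁‖ := RiccatiAux.norm_mul_le' _ _
    have hRW : ‖R t * W t‖ ≤ n * Cr * Cw := by
      refine (RiccatiAux.norm_mul_le' _ _).trans ?_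
      have h := hCr t htIcc
      have h' := hCw t htIcc
      gcongr
    have hWR : ‖(W t)ᵀ * R t‖ ≤ n * Cw * Cr := by
      refine (RiccatiAux.norm_mul_le' _ _).trans ?_
      rw [RiccatiAux.norm_transpose_eq]
      have h := hCw t htIcc
      have h' := hCr t htIcc
      gcongr
    have h3 : ‖Dm t * (R t * W t)‖ ≤ n * ‖Dm t‖ * (n * Cr * Cw) := by
      refine (RiccatiAux.norm_mul_le' _ _).trans ?_
      have h := hRW
      gcongr
    have h4 : ‖(W t)ᵀ * R t * Dm t‖ ≤ n * (n * Cw * Cr) * ‖Dm t‖ := by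
      refine (RiccatiAux.norm_mul_le' _ _).trans ?_
      have h := hWR
      gcongr
    have htotal : ‖Dm' t‖ ≤ ‖Γ₁ᵀ * Dm t‖ + ‖Dm t * Γ₁‖
        + (‖Dm t * (R t * W t)‖ + ‖(W t)ᵀ * R t * Dm t‖) := by
      rw [hDeq t htS]
      refine (norm_add_le _ _).trans ?_
      gcongr
      · exact norm_add_le _ _
      · exact norm_add_le _ _
    have hK : K * ‖Dm t‖ + 0 = n * ‖Γ₁ᵀ‖ * ‖Dm t‖ + n * ‖Dm t‖ * ‖Γ₁‖
        + (n * ‖Dm t‖ * (n * Cr * Cw) + n * (n * Cw * Cr) * ‖Dm t‖) := by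
      rw [hKdef]; ring
    rw [hK]
    have := mul_le_mul_of_nonneg_left hRW (le_refl (0:ℝ))
    linarith [h1, h2, h3, h4, htotal]
  have hDcont : ContinuousOn Dm (Icc (0:ℝ) b) :=
    (hWc.mono hsub).sub (hWtc.mono hsub)
  have hDderiv : ∀ t ∈ Ico (0:ℝ) b, HasDerivWithinAt Dm (Dm' t) (Ici t) t := by
    intro t ht
    have htS : t ∈ Ico (0:ℝ) ε := hsub ⟨ht.1, le_of_lt ht.2⟩
    refine (hDd t htS).mono_of_mem_nhdsWithin ?_
    refine mem_of_superset (Ico_mem_nhdsGE (lt_of_lt_of_le (lt_of_lt_of_le ht.2 (le_of_lt hbε)) (le_refl ε)) : Ico t ε ∈ 𝓝[≥] t) ?_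
    exact fun u hu => ⟨le_trans ht.1 hu.1, hu.2⟩
  have hD0 : ‖Dm 0‖ ≤ 0 := by
    simp [hDmdef, hW0]
  have hgron := norm_le_gronwallBound_of_norm_deriv_right_le hDcont hDderiv hD0 hbound
  have hsymm : ∀ t ∈ Icc (0:ℝ) b, (W t)ᵀ = W t := by
    intro t ht
    have h := hgron t ht
    rw [gronwallBound_ε0_δ0] at h
    have h0 : Dm t = 0 := norm_le_zero_iff.mp h
    have := sub_eq_zero.mp h0
    exact this.symm
  -- the derivative at 0 is Γ₂
  have hW'0 : W' 0 = Γ₂ := by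
    have h := heq 0 ⟨le_refl 0, hε⟩
    rw [hW0] at h
    simpa using h
  -- entrywise convergence of t⁻¹ • W t to Γ₂ as t → 0⁺
  have hslope : ∀ i j, Tendsto (fun t : ℝ => (t⁻¹ • W t) i j)
      (𝓝[Ioo (0:ℝ) ε] 0) (𝓝 (Γ₂ i j)) := by
    intro i j
    have h := hd 0 ⟨le_refl 0, hε⟩ i j
    rw [hasDerivWithinAt_iff_tendsto_slope, hW'0] at h
    have hmono : 𝓝[Ioo (0:ℝ) ε] 0 ≤ 𝓝[Ico 0 ε \ {0}] 0 :=
      nhdsWithin_mono 0 (fun t ht => ⟨⟨le_of_lt ht.1, ht.2⟩, ne_of_gt ht.1⟩)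
    refine (h.mono_left hmono).congr' ?_
    filter_upwards [self_mem_nhdsWithin] with t ht
    simp [slope, hW0, Matrix.smul_apply, smul_eq_mul]
  have hT : Tendsto (fun t : ℝ => t⁻¹ • W t) (𝓝[Ioo (0:ℝ) ε] 0) (𝓝 Γ₂) := by
    show Tendsto (fun t : ℝ => (t⁻¹ • W t : Fin n → Fin n → ℝ)) (𝓝[Ioo (0:ℝ) ε] 0)
      (𝓝 (Γ₂ : Fin n → Fin n → ℝ))
    refine tendsto_pi_nhds.mpr ?_
    intro i
    rw [tendsto_pi_nhds]
    intro j
    exact hslope i j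
  -- the minimum of the quadratic form of Γ₂ on the unit sphere
  have hqc : Continuous fun x : Fin n → ℝ => x ⬝ᵥ Γ₂ *ᵥ x := by
    simp only [dotProduct, Matrix.mulVec]
    exact continuous_finset_sum _ fun i _ => (continuous_apply i).mul
      (continuous_finset_sum _ fun j _ => continuous_const.mul (continuous_apply j))
  obtain ⟨x₀, hx₀S, hmin'⟩ := (isCompact_sphere (0 : Fin n → ℝ) 1).exists_isMinOn
    (NormedSpace.sphere_nonempty.mpr zero_le_one) hqc.continuousOn
  have hmin : ∀ z ∈ Metric.sphere (0 : Fin n → ℝ) 1, x₀ ⬝ᵥ Γ₂ *ᵥ x₀ ≤ z ⬝ᵥ Γ₂ *ᵥ z :=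
    fun z hz => isMinOn_iff.mp hmin' z hz
  set c : ℝ := x₀ ⬝ᵥ Γ₂ *ᵥ x₀ with hcdef
  have hx₀norm : ‖x₀‖ = 1 := mem_sphere_zero_iff_norm.mp hx₀S
  have hx₀0 : x₀ ≠ 0 := by
    intro h
    rw [h] at hx₀norm
    simp at hx₀norm
  have hc : 0 < c := by
    have := (posDef_iff_dotProduct_mulVec.mp hΓpd).2 hx₀0
    simpa [hcdef] using this
  set η : ℝ := c / (2 * ((n:ℝ)^2 + 1)) with hηdef
  have hη : 0 < η := by
    rw [hηdef]
    positivity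
  have hev : ∀ᶠ t in 𝓝[Ioo (0:ℝ) ε] 0, ‖t⁻¹ • W t - Γ₂‖ < η := by
    have h := (hT.sub_const Γ₂).norm
    rw [sub_self, norm_zero] at h
    exact h.eventually (gt_mem_nhds hη)
  obtain ⟨δ₀, hδ₀, hball⟩ := Metric.mem_nhdsWithin_iff.mp hev
  refine ⟨min δ₀ b, lt_min hδ₀ hb0, fun t ht0 htδ => ?_⟩
  have htδ₀ : t < δ₀ := lt_of_lt_of_le htδ (min_le_left _ _)
  have htb : t < b := lt_of_lt_of_le htδ (min_le_right _ _)
  have htIcc : t ∈ Icc (0:ℝ) b := ⟨le_of_lt ht0, le_of_lt htb⟩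
  have htIoo : t ∈ Ioo (0:ℝ) ε := ⟨ht0, lt_trans htb hbε⟩
  have hΔ : ‖t⁻¹ • W t - Γ₂‖ < η := by
    apply hball
    constructor
    · rw [Metric.mem_ball, Real.dist_eq, sub_zero, abs_of_pos ht0]
      exact htδ₀
    · exact htIoo
  refine posDef_iff_dotProduct_mulVec.mpr ⟨?_, ?_⟩
  · show (W t)ᴴ = W t
    rw [Matrix.conjTranspose_eq_transpose_of_trivial]
    exact hsymm t htIcc
  · intro x hx
    have hxn : 0 < ‖x‖ := norm_pos_iff.mpr hx
    set y : Fin n → ℝ := ‖x‖⁻¹ • x with hydef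
    have hyn : ‖y‖ = 1 := by
      rw [hydef, norm_smul, norm_inv, norm_norm, inv_mul_cancel₀ (ne_of_gt hxn)]
    have hts : t ≠ 0 := ne_of_gt ht0
    have hxs : ‖x‖ ≠ 0 := ne_of_gt hxn
    have key : x ⬝ᵥ W t *ᵥ x = t * (‖x‖^2 * (y ⬝ᵥ (t⁻¹ • W t) *ᵥ y)) := by
      rw [hydef]
      simp only [smul_dotProduct, dotProduct_smul, Matrix.smul_mulVec,
        Matrix.mulVec_smul, smul_eq_mul]
      field_simp
    have hsplit : y ⬝ᵥ (t⁻¹ • W t) *ᵥ y = y ⬝ᵥ Γ₂ *ᵥ y + y ⬝ᵥ (t⁻¹ • W t - Γ₂) *ᵥ y := by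
      rw [Matrix.sub_mulVec, dotProduct_sub]
      ring
    have h1 : c ≤ y ⬝ᵥ Γ₂ *ᵥ y := hmin y (mem_sphere_zero_iff_norm.mpr hyn)
    have h2 : |y ⬝ᵥ (t⁻¹ • W t - Γ₂) *ᵥ y| ≤ (n:ℝ)^2 * ‖t⁻¹ • W t - Γ₂‖ :=
      RiccatiAux.quad_abs_le _ (le_of_eq hyn)
    have h4 : (n:ℝ)^2 * ‖t⁻¹ • W t - Γ₂‖ ≤ (n:ℝ)^2 * η := by
      have hn2 : (0:ℝ) ≤ (n:ℝ)^2 := sq_nonneg _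
      exact mul_le_mul_of_nonneg_left (le_of_lt hΔ) hn2
    have h5 : (n:ℝ)^2 * η < c := by
      rw [hηdef]
      rw [div_eq_mul_inv]
      have hpos : (0:ℝ) < 2 * ((n:ℝ)^2 + 1) := by positivity
      rw [← mul_assoc, mul_comm ((n:ℝ)^2) c, mul_assoc, ← div_eq_mul_inv]
      have : c * ((n:ℝ)^2 / (2 * ((n:ℝ)^2 + 1))) < c * 1 := by
        apply mul_lt_mul_of_pos_left _ hc
        rw [div_lt_one hpos]
        nlinarith [sq_nonneg (n:ℝ)]
      calc c * ((n:ℝ)^2 / (2 * ((n:ℝ)^2 + 1))) < c * 1 := this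
        _ = c := mul_one c
    have hpos : 0 < y ⬝ᵥ (t⁻¹ • W t) *ᵥ y := by
      have habs := neg_abs_le (y ⬝ᵥ (t⁻¹ • W t - Γ₂) *ᵥ y)
      rw [hsplit]
      linarith
    show 0 < star x ⬝ᵥ W t *ᵥ x
    rw [star_trivial, key]
    exact mul_pos ht0 (mul_pos (pow_pos hxn 2) hpos)
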